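/- arXiv:2008.09833 — 2 statements merged into one kernel-verified Lean document; each statement's English description precedes it below -/
import Mathlib

section
/- Let γ > 1, p(s) = s^γ, P(ρ) = (ρ^γ - ρ)/(γ-1). For any 0 < a ≤ b there exists c > 0 such that for all r ∈ [a,b] and all ρ ≥ 0 with ρ ≥ 2b or ρ ≤ a/2, one has P(ρ) - P(r) - P'(r)(ρ - r) ≥ c(1 + ρ^γ). -/
/-!
Since the linear part of `P` drops out, `P ρ - P r - P' r (ρ - r)` is `(γ - 1)⁻¹` times the
Bregman divergence `D(ρ, r) = ρ^γ - r^γ - γ r^(γ-1) (ρ - r)` of the strictly convex `s ↦ s^γ`.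
`D` is positively homogeneous of degree `γ`, decreases in `ρ` on `[0, r]` and in `r` on `[0, ρ]`.
Hence `D(ρ, r) ≥ D(r/2, r) = r^γ D(1/2, 1)` when `ρ ≤ r/2`, and `D(ρ, r) ≥ D(ρ, ρ/2) = ρ^γ D(1, 1/2)`
when `ρ ≥ 2r`, where both constants are positive because `D(1, 1) = 0`. For `r ∈ [a, b]` this
bounds `D(ρ, r)` below by a multiple of `a^γ ≥ ρ^γ` in the first case and of `ρ^γ ≥ (2b)^γ` in
the second, and either bound dominates a multiple of `1 + ρ^γ`.
-/

open Real Set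

lemma div_one_add_self_mul_le_of_le {M t : ℝ} (hM : 0 ≤ M) (hMt : M ≤ t) :
    M / (1 + M) * (1 + t) ≤ t := by
  rw [div_mul_eq_mul_div, div_le_iff₀ (by positivity)]
  nlinarith

lemma div_one_add_self_mul_le_of_ge {m t : ℝ} (hm : 0 ≤ m) (htm : t ≤ m) :
    m / (1 + m) * (1 + t) ≤ m := by
  rw [div_mul_eq_mul_div, div_le_iff₀ (by positivity)]
  nlinarith

noncomputable def rpowBregman (γ x y : ℝ) : ℝ := x ^ γ - y ^ γ - γ * y ^ (γ - 1) * (x - y)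

section rpowBregman

variable {γ x y : ℝ}

@[simp]
lemma rpowBregman_self : rpowBregman γ y y = 0 := by
  simp [rpowBregman]

lemma rpowBregman_mul {c : ℝ} (hc : 0 < c) (hx : 0 ≤ x) (hy : 0 ≤ y) :
    rpowBregman γ (c * x) (c * y) = c ^ γ * rpowBregman γ x y := by
  have hc_pow : c ^ (γ - 1) = c ^ γ / c := rpow_sub_one hc.ne' γ
  simp only [rpowBregman, mul_rpow hc.le hx, mul_rpow hc.le hy, hc_pow]
  field_simp

lemma sub_sub_deriv_mul_eq_rpowBregman (hγ : 1 < γ) {P : ℝ → ℝ}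
    (hP : ∀ ρ : ℝ, P ρ = (ρ ^ γ - ρ) / (γ - 1)) (r ρ : ℝ) :
    P ρ - P r - deriv P r * (ρ - r) = rpowBregman γ ρ r / (γ - 1) := by
  have hderiv : HasDerivAt P ((γ * r ^ (γ - 1) - 1) / (γ - 1)) r := by
    rw [show P = fun s => (s ^ γ - s) / (γ - 1) from funext hP]
    exact ((hasDerivAt_rpow_const (Or.inr hγ.le)).sub (hasDerivAt_id r)).div_const _
  have hγ₁ : γ - 1 ≠ 0 := (sub_pos.2 hγ).ne'
  rw [hderiv.deriv, hP, hP, rpowBregman]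
  field_simp
  ring

lemma rpowBregman_strictAntiOn_left (hγ : 1 < γ) :
    StrictAntiOn (fun x => rpowBregman γ x y) (Icc 0 y) := by
  refine strictAntiOn_of_deriv_neg (convex_Icc 0 y) ?_ fun x hx => ?_
  · exact ((continuous_rpow_const (by linarith)).sub continuous_const |>.sub
      (continuous_const.mul (continuous_id.sub continuous_const))).continuousOn
  rw [interior_Icc] at hx
  have hderiv : HasDerivAt (fun x => rpowBregman γ x y) (γ * x ^ (γ - 1) - γ * y ^ (γ - 1)) x :=
    (((hasDerivAt_rpow_const (Or.inr hγ.le)).sub_const (y ^ γ)).sub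
      (((hasDerivAt_id x).sub_const y).const_mul (γ * y ^ (γ - 1)))).congr_deriv (by ring)
  have hlt : x ^ (γ - 1) < y ^ (γ - 1) := rpow_lt_rpow hx.1.le hx.2 (by linarith)
  rw [hderiv.deriv]
  nlinarith

lemma rpowBregman_strictAntiOn_right (hγ : 1 < γ) :
    StrictAntiOn (fun y => rpowBregman γ x y) (Icc 0 x) := by
  refine strictAntiOn_of_deriv_neg (convex_Icc 0 x) ?_ fun y hy => ?_
  · exact (continuous_const.sub (continuous_rpow_const (by linarith)) |>.sub
      ((continuous_const.mul (continuous_rpow_const (by linarith))).mul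
        (continuous_const.sub continuous_id))).continuousOn
  rw [interior_Icc] at hy
  have hderiv : HasDerivAt (fun y => rpowBregman γ x y)
      (-(γ * (γ - 1) * y ^ (γ - 1 - 1) * (x - y))) y :=
    (((hasDerivAt_const y (x ^ γ)).sub (hasDerivAt_rpow_const (Or.inl hy.1.ne'))).sub
      (((hasDerivAt_rpow_const (Or.inl hy.1.ne')).const_mul γ).mul
        ((hasDerivAt_id' y).const_sub x))).congr_deriv (by ring)
  have hpow : 0 < y ^ (γ - 1 - 1) := rpow_pos_of_pos hy.1 _
  have hγ₁ : 0 < γ - 1 := by linarith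
  have hxy : 0 < x - y := sub_pos.2 hy.2
  rw [hderiv.deriv, neg_lt_zero]
  positivity

lemma rpowBregman_half_one_pos (hγ : 1 < γ) : 0 < rpowBregman γ (1 / 2) 1 := by
  simpa using rpowBregman_strictAntiOn_left hγ ⟨by norm_num, by norm_num⟩ ⟨zero_le_one, le_rfl⟩
    (by norm_num : (1 / 2 : ℝ) < 1)

lemma rpowBregman_one_half_pos (hγ : 1 < γ) : 0 < rpowBregman γ 1 (1 / 2) := by
  simpa using rpowBregman_strictAntiOn_right hγ ⟨by norm_num, by norm_num⟩ ⟨zero_le_one, le_rfl⟩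
    (by norm_num : (1 / 2 : ℝ) < 1)

lemma rpowBregman_ge_of_le_half (hγ : 1 < γ) (hy : 0 < y) (hx : 0 ≤ x) (hxy : x ≤ y / 2) :
    y ^ γ * rpowBregman γ (1 / 2) 1 ≤ rpowBregman γ x y := by
  calc y ^ γ * rpowBregman γ (1 / 2) 1 = rpowBregman γ (y * (1 / 2)) (y * 1) :=
        (rpowBregman_mul hy (by norm_num) zero_le_one).symm
    _ ≤ rpowBregman γ x y := by
        rw [mul_one]
        exact (rpowBregman_strictAntiOn_left hγ).antitoneOn ⟨hx, by linarith⟩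
          ⟨by positivity, by linarith⟩ (by linarith)

lemma rpowBregman_ge_of_two_mul_le (hγ : 1 < γ) (hy : 0 < y) (hxy : 2 * y ≤ x) :
    x ^ γ * rpowBregman γ 1 (1 / 2) ≤ rpowBregman γ x y := by
  have hx : 0 < x := by linarith
  calc x ^ γ * rpowBregman γ 1 (1 / 2) = rpowBregman γ (x * 1) (x * (1 / 2)) :=
        (rpowBregman_mul hx zero_le_one (by norm_num)).symm
    _ ≤ rpowBregman γ x y := by
        rw [mul_one]
        exact (rpowBregman_strictAntiOn_right hγ).antitoneOn ⟨hy.le, by linarith⟩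
          ⟨by positivity, by linarith⟩ (by linarith)

end rpowBregman

theorem stmt_4 (γ : ℝ) (hγ : 1 < γ)
    (P : ℝ → ℝ) (hP : ∀ ρ : ℝ, P ρ = (ρ ^ γ - ρ) / (γ - 1))
    (a b : ℝ) (ha : 0 < a) (hab : a ≤ b) :
    ∃ c : ℝ, 0 < c ∧ ∀ r ∈ Set.Icc a b, ∀ ρ : ℝ, 0 ≤ ρ →
      (2 * b ≤ ρ ∨ ρ ≤ a / 2) →
      c * (1 + ρ ^ γ) ≤ P ρ - P r - deriv P r * (ρ - r) := by
  have hb : 0 < b := ha.trans_le hab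
  set κ₁ := rpowBregman γ 1 (1 / 2)
  set κ₂ := rpowBregman γ (1 / 2) 1
  set M := (2 * b) ^ γ
  set m := a ^ γ
  have hκ₁ : 0 < κ₁ := rpowBregman_one_half_pos hγ
  have hκ₂ : 0 < κ₂ := rpowBregman_half_one_pos hγ
  have hM : 0 < M := by positivity
  have hm : 0 < m := by positivity
  refine ⟨min (κ₁ * (M / (1 + M))) (κ₂ * (m / (1 + m))) / (γ - 1),
    div_pos (by positivity) (sub_pos.2 hγ), ?_⟩
  rintro r ⟨har, hrb⟩ ρ hρ hfar
  have hr : 0 < r := ha.trans_le har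
  rw [sub_sub_deriv_mul_eq_rpowBregman hγ hP, div_mul_eq_mul_div,
    div_le_div_iff_of_pos_right (sub_pos.2 hγ)]
  rcases hfar with hfar | hnear
  · have hMρ : M ≤ ρ ^ γ := rpow_le_rpow (by positivity) hfar (by linarith)
    calc min (κ₁ * (M / (1 + M))) (κ₂ * (m / (1 + m))) * (1 + ρ ^ γ)
        ≤ κ₁ * (M / (1 + M) * (1 + ρ ^ γ)) := by
          rw [← mul_assoc]; gcongr; exact min_le_left _ _
      _ ≤ κ₁ * ρ ^ γ := by gcongr; exact div_one_add_self_mul_le_of_le hM.le hMρ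
      _ ≤ rpowBregman γ ρ r := by
        rw [mul_comm]; exact rpowBregman_ge_of_two_mul_le hγ hr (by linarith)
  · have hρm : ρ ^ γ ≤ m := rpow_le_rpow hρ (by linarith) (by linarith)
    calc min (κ₁ * (M / (1 + M))) (κ₂ * (m / (1 + m))) * (1 + ρ ^ γ)
        ≤ κ₂ * (m / (1 + m) * (1 + ρ ^ γ)) := by
          rw [← mul_assoc]; gcongr; exact min_le_right _ _
      _ ≤ κ₂ * m := by gcongr; exact div_one_add_self_mul_le_of_ge hm.le hρm
      _ ≤ r ^ γ * κ₂ := by rw [mul_comm]; gcongr; exact rpow_le_rpow ha.le har (by linarith)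
      _ ≤ rpowBregman γ ρ r := rpowBregman_ge_of_le_half hγ hr hρ (by linarith)
end

section
/- Let γ > 1, p(ρ) = ρ^γ and P(ρ) = (ρ^γ - ρ)/(γ-1). For any 0 < a ≤ b there exist constants c₁, c₂ > 0 such that for all r ∈ [a,b] and all ρ > 0: c₁(P(ρ) - P(r) - P'(r)(ρ-r)) ≤ p(ρ) - p(r) - p'(r)(ρ-r) ≤ c₂(P(ρ) - P(r) - P'(r)(ρ-r)). -/
theorem stmt_5 (γ : ℝ) (hγ : 1 < γ)
    (p P : ℝ → ℝ) (hp : ∀ ρ : ℝ, p ρ = ρ ^ γ)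
    (hP : ∀ ρ : ℝ, P ρ = (ρ ^ γ - ρ) / (γ - 1))
    (a b : ℝ) (ha : 0 < a) (hab : a ≤ b) :
    ∃ c₁ c₂ : ℝ, 0 < c₁ ∧ 0 < c₂ ∧ ∀ r ∈ Set.Icc a b, ∀ ρ : ℝ, 0 < ρ →
      c₁ * (P ρ - P r - deriv P r * (ρ - r)) ≤ p ρ - p r - deriv p r * (ρ - r) ∧
      p ρ - p r - deriv p r * (ρ - r) ≤ c₂ * (P ρ - P r - deriv P r * (ρ - r)) := by
  refine ⟨γ - 1, γ - 1, by linarith, by linarith, ?_⟩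
  intro r hr ρ hρ
  have hp' : deriv p r = γ * r ^ (γ - 1) := by
    have h1 : p = fun x : ℝ => x ^ γ := funext hp
    rw [h1, (Real.hasDerivAt_rpow_const (x := r) (p := γ) (Or.inr hγ.le)).deriv]
  have hP' : deriv P r = (γ * r ^ (γ - 1) - 1) / (γ - 1) := by
    have h1 : P = fun x : ℝ => (x ^ γ - x) / (γ - 1) := funext hP
    have h2 : HasDerivAt (fun x : ℝ => (x ^ γ - x) / (γ - 1))
        ((γ * r ^ (γ - 1) - 1) / (γ - 1)) r := by
      simpa using ((Real.hasDerivAt_rpow_const (x := r) (p := γ)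
        (Or.inr hγ.le)).sub (hasDerivAt_id r)).div_const (γ - 1)
    rw [h1, h2.deriv]
  have hne : γ - 1 ≠ 0 := by linarith
  have key : (γ - 1) * (P ρ - P r - deriv P r * (ρ - r))
      = p ρ - p r - deriv p r * (ρ - r) := by
    rw [hp r, hp ρ, hP r, hP ρ, hp', hP']
    field_simp
    ring
  exact ⟨le_of_eq key, ge_of_eq key⟩
end
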